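/- Let V be a real inner product space, let β ∈ V be nonzero, and let m : V → ℂ be a finitely supported function such that m(s_β(ω)) = m(ω) for all ω ∈ V, where s_β(ω) = ω − (2⟨ω,β⟩/⟨β,β⟩)·β is the orthogonal reflection across the hyperplane β^⊥, and such that 2⟨ω,β⟩/⟨β,β⟩ ∈ ℤ for every ω in the support of m. Then for every ℝ-linear map φ : V → ℂ with φ(β) ∈ 2πi·ℤ, one has Σ_{ω ∈ supp(m)} m(ω)·⟨β,ω⟩·exp(φ(ω)) = 0. -/

import Mathlib

/-! The reflection `s_β` permutes the support of `m` and negates `⟪β, ·⟫`. On the support,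
`ω - s_β ω` is an integer multiple of `β`, and `exp (φ β) = 1`, so `exp ∘ φ` is `s_β`-invariant there.
Hence the summand is odd under an involution of the index set, and the sum vanishes. -/

open scoped RealInnerProductSpace

theorem Finset.sum_eq_zero_of_involution_of_neg {ι G : Type*} [AddCommGroup G] [IsAddTorsionFree G]
    {s : Finset ι} {f : ι → G} (g : ι → ι) (hg : Function.Involutive g)
    (g_mem : ∀ a ∈ s, g a ∈ s) (hf : ∀ a ∈ s, f (g a) = -f a) :
    ∑ a ∈ s, f a = 0 := by
  have hsum : ∑ a ∈ s, f (g a) = ∑ a ∈ s, f a :=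
    Finset.sum_nbij' g g g_mem g_mem (fun a _ => hg a) (fun a _ => hg a) (fun _ _ => rfl)
  rw [Finset.sum_congr rfl hf, Finset.sum_neg_distrib, eq_comm] at hsum
  exact self_eq_neg.mp hsum

theorem Complex.exp_map_sub_zsmul_of_exp_eq_one {G F : Type*} [AddCommGroup G] [FunLike F G ℂ]
    [AddMonoidHomClass F G ℂ] (φ : F) {β : G} (hβ : exp (φ β) = 1) (ω : G) (n : ℤ) :
    exp (φ (ω - n • β)) = exp (φ ω) := by
  rw [map_sub, map_zsmul, zsmul_eq_mul, exp_sub, exp_int_mul, hβ, one_zpow, div_one]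

section RootReflection

variable {V : Type*} [NormedAddCommGroup V] [InnerProductSpace ℝ V]

/-- For `β = 0` the division by `⟪β, β⟫` is junk and this is the identity. -/
noncomputable def rootReflection (β ω : V) : V :=
  ω - (2 * ⟪ω, β⟫ / ⟪β, β⟫) • β

theorem inner_rootReflection_right (β ω : V) :
    ⟪β, rootReflection β ω⟫ = -⟪β, ω⟫ := by
  rcases eq_or_ne β 0 with rfl | hβ
  · simp
  have hββ : ⟪β, β⟫ ≠ 0 := inner_self_ne_zero.mpr hβ
  rw [rootReflection, inner_sub_right, real_inner_smul_right, real_inner_comm ω β]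
  field_simp
  ring

theorem rootReflection_involutive (β : V) : Function.Involutive (rootReflection β) := by
  intro ω
  have hcoeff : ⟪rootReflection β ω, β⟫ = -⟪ω, β⟫ := by
    rw [real_inner_comm, inner_rootReflection_right, real_inner_comm]
  rw [rootReflection, hcoeff, rootReflection]
  simp only [mul_neg, neg_div, neg_smul, sub_neg_eq_add, sub_add_cancel]

theorem rootReflection_eq_sub_zsmul {β ω : V} {n : ℤ} (hn : 2 * ⟪ω, β⟫ / ⟪β, β⟫ = n) :
    rootReflection β ω = ω - n • β := by
  rw [rootReflection, hn, Int.cast_smul_eq_zsmul]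

end RootReflection

theorem stmt1 (V : Type*) [NormedAddCommGroup V] [InnerProductSpace ℝ V]
    (β : V) (m : V →₀ ℂ)
    (hinv : ∀ ω : V, m (ω - (2 * ⟪ω, β⟫ / ⟪β, β⟫) • β) = m ω)
    (hint : ∀ ω ∈ m.support, ∃ n : ℤ, 2 * ⟪ω, β⟫ / ⟪β, β⟫ = (n : ℝ))
    (φ : V →ₗ[ℝ] ℂ) (hφ : ∃ n : ℤ, φ β = 2 * Real.pi * Complex.I * n) :
    ∑ ω ∈ m.support, m ω * (⟪β, ω⟫ : ℂ) * Complex.exp (φ ω) = 0 := by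
  have hm : ∀ ω, m (rootReflection β ω) = m ω := hinv
  have hexp : Complex.exp (φ β) = 1 := by
    obtain ⟨k, hk⟩ := hφ
    exact Complex.exp_eq_one_iff.mpr ⟨k, by rw [hk]; ring⟩
  refine Finset.sum_eq_zero_of_involution_of_neg (rootReflection β)
    (rootReflection_involutive β) (fun ω hω => by simpa [hm] using hω) fun ω hω => ?_
  obtain ⟨n, hn⟩ := hint ω hω
  rw [hm, inner_rootReflection_right, rootReflection_eq_sub_zsmul hn,
    Complex.exp_map_sub_zsmul_of_exp_eq_one φ hexp]
  push_cast
  ring
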